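/- arXiv:2507.14060 — 3 statements merged into one kernel-verified Lean document; each statement's English description precedes it below -/
import Mathlib

section
/- Let n be a power of 2 and let P ⊂ ℝⁿ be the set of 2n−1 unit vectors x_{h,j} = 2^{-h/2} ∑_{i ∈ I_{h,j}} e_i of the Euclidean binary tree structure. Then there exists a 1-navigable directed graph H = (P, E) (under the Euclidean metric) with maximum out-degree O(log n); concretely, the graph consisting of all parent-child edges in the dyadic tree plus edges from each node to each of its ancestors is 1-navigable and has maximum out-degree at most log₂ n + 1. -/
/-- The dyadic interval `I_{h,j}` (0-indexed `j`) inside `Fin (2^m)`. -/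
def dyadicI (m h j : ℕ) : Finset (Fin (2 ^ m)) :=
  Finset.univ.filter fun i => j * 2 ^ h ≤ (i : ℕ) ∧ (i : ℕ) < (j + 1) * 2 ^ h

/-- The unit vector `x_{h,j} = 2^{-h/2} ∑_{i ∈ I_{h,j}} e_i` in Euclidean space `ℝ^{2^m}`. -/
noncomputable def xvec (m h j : ℕ) : EuclideanSpace ℝ (Fin (2 ^ m)) :=
  WithLp.toLp 2 fun i => if i ∈ dyadicI m h j then (2 : ℝ) ^ (-(h : ℝ) / 2) else 0

/-- Valid index pairs `(h, j)` of the binary-tree pointset: `h ≤ m`, `j < 2^(m-h)`. -/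
def BTVertex (m : ℕ) := {p : ℕ × ℕ // p.1 ≤ m ∧ p.2 < 2 ^ (m - p.1)}

/-- Edges: from each node to its two children (one level down, contained interval),
and from each node to each of its (strict) ancestors. -/
def BTEdge (m : ℕ) (s t : BTVertex m) : Prop :=
  (t.val.1 + 1 = s.val.1 ∧ dyadicI m t.val.1 t.val.2 ⊆ dyadicI m s.val.1 s.val.2) ∨
  dyadicI m s.val.1 s.val.2 ⊂ dyadicI m t.val.1 t.val.2

/-! The points are unit vectors with `⟪x_p, x_q⟫ = |I_p ∩ I_q| · 2^(-(h_p + h_q)/2)`, so moving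
closer to `x_t` means raising the inner product with `x_t`, and dyadic intervals are either nested
or disjoint. If `I_s ⊂ I_t`, jump straight to the ancestor `t`. If `I_t ⊂ I_s`, step to the child
`u` of `s` containing `I_t`: the inner product grows from `2^((h_t - h_s)/2)` to
`2^((h_t - h_s + 1)/2)`. If they are disjoint, `x_s ⊥ x_t` while the root has positive inner
product with `x_t`. The out-neighbours of `s` are its two children and one ancestor per level
above `h_s`, at most `m + 1` vertices. -/

open Finset RealInnerProductSpace

theorem dist_lt_dist_iff_inner_lt {E : Type*} [NormedAddCommGroup E] [InnerProductSpace ℝ E]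
    {x y z : E} (h : ‖x‖ = ‖y‖) : dist y z < dist x z ↔ ⟪x, z⟫ < ⟪y, z⟫ := by
  rw [dist_eq_norm, dist_eq_norm, ← sq_lt_sq₀ (norm_nonneg _) (norm_nonneg _),
    norm_sub_sq_real, norm_sub_sq_real, h]
  constructor <;> intro <;> linarith

section Dyadic

variable {m h j h' j' : ℕ}

theorem mem_dyadicI {i : Fin (2 ^ m)} : i ∈ dyadicI m h j ↔ (i : ℕ) / 2 ^ h = j := by
  have : 0 < 2 ^ h := by positivity
  rw [Nat.div_eq_iff this]
  simp only [dyadicI, mem_filter, mem_univ, true_and, add_mul, one_mul]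
  omega

theorem card_dyadicI (hb : (j + 1) * 2 ^ h ≤ 2 ^ m) : #(dyadicI m h j) = 2 ^ h := by
  have : dyadicI m h j = (Ico (j * 2 ^ h) ((j + 1) * 2 ^ h)).attachFin
      (fun _ hx => (mem_Ico.mp hx).2.trans_le hb) := by
    ext i; simp [dyadicI]
  rw [this, card_attachFin, Nat.card_Ico, add_mul, one_mul, Nat.add_sub_cancel_left]

theorem dyadicI_subset_of_mem (hh : h ≤ h') {i : Fin (2 ^ m)} (hi : i ∈ dyadicI m h j)
    (hi' : i ∈ dyadicI m h' j') : dyadicI m h j ⊆ dyadicI m h' j' := by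
  have div_eq (a : ℕ) : a / 2 ^ h' = a / 2 ^ h / 2 ^ (h' - h) := by
    rw [Nat.div_div_eq_div_mul, ← pow_add, Nat.add_sub_cancel' hh]
  intro x hx
  rw [mem_dyadicI] at hi hi' hx ⊢
  rw [div_eq, hx, ← hi, ← div_eq, hi']

theorem inner_xvec : ⟪xvec m h j, xvec m h' j'⟫ =
    #(dyadicI m h j ∩ dyadicI m h' j') * (2 : ℝ) ^ (-(h : ℝ) / 2) * (2 : ℝ) ^ (-(h' : ℝ) / 2) := by
  simp only [xvec, PiLp.inner_apply, RCLike.inner_apply, conj_trivial]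
  simp_rw [ite_zero_mul_ite_zero, ← mem_inter, sum_ite_mem, univ_inter, sum_const, nsmul_eq_mul,
    inter_comm]
  ring

end Dyadic

namespace BTVertex

variable {m : ℕ}

abbrev interval (p : BTVertex m) : Finset (Fin (2 ^ m)) := dyadicI m p.1.1 p.1.2

noncomputable abbrev point (p : BTVertex m) : EuclideanSpace ℝ (Fin (2 ^ m)) := xvec m p.1.1 p.1.2

theorem succ_mul_le (p : BTVertex m) : (p.1.2 + 1) * 2 ^ p.1.1 ≤ 2 ^ m :=
  calc (p.1.2 + 1) * 2 ^ p.1.1 ≤ 2 ^ (m - p.1.1) * 2 ^ p.1.1 := Nat.mul_le_mul_right _ p.2.2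
    _ = 2 ^ m := by rw [← pow_add, Nat.sub_add_cancel p.2.1]

theorem card_interval (p : BTVertex m) : #p.interval = 2 ^ p.1.1 := card_dyadicI p.succ_mul_le

def base (p : BTVertex m) : Fin (2 ^ m) :=
  ⟨p.1.2 * 2 ^ p.1.1, by
    have hle := p.succ_mul_le
    have := Nat.two_pow_pos p.1.1
    rw [add_one_mul] at hle
    omega⟩

theorem base_mem_interval (p : BTVertex m) : p.base ∈ p.interval :=
  mem_dyadicI.2 (Nat.mul_div_cancel _ (Nat.two_pow_pos _))

theorem snd_eq_of_subset {p q : BTVertex m} (h : p.interval ⊆ q.interval) :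
    q.1.2 = (p.base : ℕ) / 2 ^ q.1.1 :=
  (mem_dyadicI.1 (h p.base_mem_interval)).symm

theorem level_le_of_subset {p q : BTVertex m} (h : p.interval ⊆ q.interval) : p.1.1 ≤ q.1.1 := by
  have := card_le_card h
  rwa [card_interval, card_interval, Nat.pow_le_pow_iff_right (by norm_num)] at this

theorem level_lt_of_ssubset {p q : BTVertex m} (h : p.interval ⊂ q.interval) : p.1.1 < q.1.1 := by
  have := card_lt_card h
  rwa [card_interval, card_interval, Nat.pow_lt_pow_iff_right (by norm_num)] at this

theorem eq_of_subset_of_level_eq {p q q' : BTVertex m} (hq : p.interval ⊆ q.interval)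
    (hq' : p.interval ⊆ q'.interval) (h : q.1.1 = q'.1.1) : q = q' :=
  Subtype.ext (Prod.ext h (by rw [snd_eq_of_subset hq, snd_eq_of_subset hq', h]))

theorem interval_injective : Function.Injective (interval : BTVertex m → Finset (Fin (2 ^ m))) :=
  fun _ _ h => eq_of_subset_of_level_eq subset_rfl h.le
    (le_antisymm (level_le_of_subset h.le) (level_le_of_subset h.ge))

theorem disjoint_of_not_subset {p q : BTVertex m} (hpq : ¬p.interval ⊆ q.interval)
    (hqp : ¬q.interval ⊆ p.interval) : Disjoint p.interval q.interval := by
  refine disjoint_left.2 fun i hp hq => ?_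
  rcases le_total p.1.1 q.1.1 with h | h
  · exact hpq (dyadicI_subset_of_mem h hp hq)
  · exact hqp (dyadicI_subset_of_mem h hq hp)

def ancestor (p : BTVertex m) (k : ℕ) (hk : k ≤ m) : BTVertex m :=
  ⟨(k, p.base / 2 ^ k), hk, by
    rw [Nat.div_lt_iff_lt_mul (by positivity), ← pow_add, Nat.sub_add_cancel hk]
    exact p.base.2⟩

theorem interval_subset_ancestor (p : BTVertex m) {k : ℕ} (hpk : p.1.1 ≤ k) (hk : k ≤ m) :
    p.interval ⊆ (p.ancestor k hk).interval :=
  dyadicI_subset_of_mem hpk p.base_mem_interval (mem_dyadicI.2 rfl)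

def root : BTVertex m := ⟨(m, 0), le_rfl, by simp⟩

theorem interval_subset_root (p : BTVertex m) : p.interval ⊆ root.interval :=
  fun i _ => mem_dyadicI.2 (Nat.div_eq_of_lt i.2)

theorem inner_point_of_subset {p q : BTVertex m} (h : p.interval ⊆ q.interval) :
    ⟪p.point, q.point⟫ = 2 ^ (((p.1.1 : ℝ) - q.1.1) / 2) := by
  rw [inner_xvec, inter_eq_left.2 h, card_interval, Nat.cast_pow, Nat.cast_ofNat,
    ← Real.rpow_natCast, ← Real.rpow_add two_pos, ← Real.rpow_add two_pos]
  ring_nf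

theorem inner_point_of_disjoint {p q : BTVertex m} (h : Disjoint p.interval q.interval) :
    ⟪p.point, q.point⟫ = 0 := by
  rw [inner_xvec, disjoint_iff_inter_eq_empty.1 h, card_empty, Nat.cast_zero, zero_mul, zero_mul]

theorem norm_point (p : BTVertex m) : ‖p.point‖ = 1 := by
  have := inner_point_of_subset (subset_refl p.interval)
  rw [real_inner_self_eq_norm_sq, sub_self, zero_div, Real.rpow_zero] at this
  exact (pow_eq_one_iff_of_nonneg (norm_nonneg _) two_ne_zero).1 this

theorem dist_point_lt_of_inner_lt {s t u : BTVertex m}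
    (h : ⟪s.point, t.point⟫ < ⟪u.point, t.point⟫) :
    dist u.point t.point < dist s.point t.point :=
  (dist_lt_dist_iff_inner_lt (by rw [norm_point, norm_point])).2 h

theorem exists_edge_dist_lt {s t : BTVertex m} (hst : s ≠ t) :
    ∃ u, BTEdge m s u ∧ dist u.point t.point < dist s.point t.point := by
  by_cases hs : s.interval ⊆ t.interval
  · have hst' := hs.ssubset_of_ne (interval_injective.ne hst)
    have hlt : (s.1.1 : ℝ) < t.1.1 := by exact_mod_cast level_lt_of_ssubset hst'
    refine ⟨t, Or.inr hst', dist_point_lt_of_inner_lt ?_⟩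
    rw [inner_point_of_subset hs, inner_point_of_subset subset_rfl, sub_self, zero_div,
      Real.rpow_zero]
    exact Real.rpow_lt_one_of_one_lt_of_neg one_lt_two (by linarith)
  by_cases ht : t.interval ⊆ s.interval
  · have hlt := level_lt_of_ssubset (ht.ssubset_of_ne (interval_injective.ne hst.symm))
    have hk : s.1.1 - 1 ≤ m := (Nat.sub_le _ _).trans s.2.1
    let u := t.ancestor (s.1.1 - 1) hk
    have hu : u.1.1 = s.1.1 - 1 := rfl
    have htu : t.interval ⊆ u.interval := t.interval_subset_ancestor (by omega) hk
    have hus : u.interval ⊆ s.interval :=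
      dyadicI_subset_of_mem (by omega) (htu t.base_mem_interval) (ht t.base_mem_interval)
    refine ⟨u, Or.inl ⟨by omega, hus⟩, dist_point_lt_of_inner_lt ?_⟩
    rw [real_inner_comm, inner_point_of_subset ht, real_inner_comm, inner_point_of_subset htu]
    have hus' : (u.1.1 : ℝ) < s.1.1 := by exact_mod_cast (show u.1.1 < s.1.1 by omega)
    exact Real.rpow_lt_rpow_of_exponent_lt one_lt_two (by linarith)
  · have hne : s.interval ≠ root.interval := fun h => ht (h ▸ interval_subset_root t)
    refine ⟨root, Or.inr ((interval_subset_root s).ssubset_of_ne hne),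
      dist_point_lt_of_inner_lt ?_⟩
    rw [inner_point_of_disjoint (disjoint_of_not_subset hs ht), real_inner_comm,
      inner_point_of_subset (interval_subset_root t)]
    positivity

theorem snd_div_two_of_child {u s : BTVertex m} (hlevel : u.1.1 + 1 = s.1.1)
    (h : u.interval ⊆ s.interval) : u.1.2 / 2 = s.1.2 := by
  rw [snd_eq_of_subset h, ← hlevel, pow_succ, ← Nat.div_div_eq_div_mul]
  exact congrArg (· / 2) (Nat.mul_div_cancel _ (Nat.two_pow_pos _)).symm

theorem child_or_ancestor_of_edge {s u : BTVertex m} (h : BTEdge m s u) :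
    (u.1.1 + 1 = s.1.1 ∧ u.1.2 / 2 = s.1.2) ∨ (s.1.1 < u.1.1 ∧ s.interval ⊆ u.interval) := by
  rcases h with ⟨hlevel, hsub⟩ | hss
  · exact Or.inl ⟨hlevel, snd_div_two_of_child hlevel hsub⟩
  · exact Or.inr ⟨level_lt_of_ssubset hss, hss.subset⟩

theorem ncard_edge_le (s : BTVertex m) : {u | BTEdge m s u}.ncard ≤ m + 1 := by
  -- The two children are sent to levels `s.1.1 - 1` and `s.1.1` by the parity of their index,
  -- each ancestor to its own level, which lies above `s.1.1`.
  let f : BTVertex m → ℕ := fun u => if u.1.1 < s.1.1 then u.1.1 + u.1.2 % 2 else u.1.1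
  have hmaps : ∀ u ∈ {u | BTEdge m s u}, f u ∈ (range (m + 1) : Set ℕ) := by
    intro u hu
    have := s.2.1
    have := u.2.1
    rcases child_or_ancestor_of_edge hu with ⟨h, -⟩ | ⟨h, -⟩ <;>
      simp only [f, coe_range, Set.mem_Iio] <;> split_ifs <;> omega
  have hinj : Set.InjOn f {u | BTEdge m s u} := by
    intro u hu v hv huv
    rcases child_or_ancestor_of_edge hu with ⟨hu1, hu2⟩ | ⟨hu1, hu2⟩ <;>
      rcases child_or_ancestor_of_edge hv with ⟨hv1, hv2⟩ | ⟨hv1, hv2⟩ <;>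
      simp only [f] at huv <;> split_ifs at huv <;> try omega
    · exact Subtype.ext (Prod.ext (by omega) (by omega))
    · exact eq_of_subset_of_level_eq hu2 hv2 huv
  simpa using Set.ncard_le_ncard_of_injOn f hmaps hinj (finite_toSet _)

end BTVertex

/-- the tree-plus-ancestor graph on the Euclidean binary tree pointset
(`n = 2^m`) is 1-navigable under the Euclidean metric and has max out-degree
at most `log₂ n + 1 = m + 1`. -/
theorem stmt4 (m : ℕ) :
    (∀ s t : BTVertex m, s ≠ t →
      ∃ u : BTVertex m, BTEdge m s u ∧
        dist (xvec m u.val.1 u.val.2) (xvec m t.val.1 t.val.2) <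
          dist (xvec m s.val.1 s.val.2) (xvec m t.val.1 t.val.2)) ∧
    (∀ s : BTVertex m, {u : BTVertex m | BTEdge m s u}.ncard ≤ m + 1) :=
  ⟨fun _ _ => BTVertex.exists_edge_dist_lt, BTVertex.ncard_edge_le⟩
end

section
/- For any α ≥ 1 and any finite metric space (P, d), if H is an α-navigable graph on P and G is the graph obtained by, for each s ∈ P, choosing any family of vertices u whose sets Z_α(s,u) cover P \ {s} with at most ρ times the minimum number of such sets, then G is α-navigable, the out-degree of each s in G is at most ρ times its out-degree in H, and consequently the maximum out-degree and total edge count of G are at most ρ times those of any α-navigable graph on P. -/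
/-- if for each `s` the out-neighborhood of `s` in `G` covers all
navigability constraints (so `G` is α-navigable) and has size at most `ρ` times the
minimum size of a family of sets `Z_α(s,u)` covering `P \ {s}`, then for any
α-navigable graph `H`, each out-degree of `G` is at most `ρ` times that of `H`,
and hence the max out-degree and total edge count of `G` are at most `ρ` times
those of `H`. -/
theorem stmt5 {P : Type*} [MetricSpace P] [Fintype P] (α ρ : ℝ) (hα : 1 ≤ α) (hρ : 1 ≤ ρ)
    (EG EH : P → P → Prop)
    (hGcov : ∀ s t : P, t ≠ s → ∃ u : P, EG s u ∧ dist u t < dist s t / α)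
    (hGapprox : ∀ s : P, ({u : P | EG s u}.ncard : ℝ) ≤
      ρ * (sInf {k : ℕ | ∃ U : Finset P, U.card = k ∧
            ∀ t : P, t ≠ s → ∃ u ∈ U, dist u t < dist s t / α} : ℕ))
    (hH : ∀ s t : P, t ≠ s → ∃ u : P, EH s u ∧ dist u t < dist s t / α) :
    (∀ s t : P, t ≠ s → ∃ u : P, EG s u ∧ dist u t < dist s t / α) ∧
    (∀ s : P, ({u : P | EG s u}.ncard : ℝ) ≤ ρ * {u : P | EH s u}.ncard) ∧
    (((Finset.univ.sup (fun s : P => {u : P | EG s u}.ncard) : ℕ) : ℝ) ≤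
      ρ * (Finset.univ.sup (fun s : P => {u : P | EH s u}.ncard) : ℕ)) ∧
    (({p : P × P | EG p.1 p.2}.ncard : ℝ) ≤ ρ * {p : P × P | EH p.1 p.2}.ncard) := by
  classical
  have hρ0 : (0:ℝ) ≤ ρ := le_trans zero_le_one hρ
  have key : ∀ s : P, ({u : P | EG s u}.ncard : ℝ) ≤ ρ * {u : P | EH s u}.ncard := by
    intro s
    have h1 : sInf {k : ℕ | ∃ U : Finset P, U.card = k ∧
          ∀ t : P, t ≠ s → ∃ u ∈ U, dist u t < dist s t / α} ≤ {u : P | EH s u}.ncard := by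
      apply Nat.sInf_le
      refine ⟨Set.toFinset {u : P | EH s u}, ?_, ?_⟩
      · rw [Set.ncard_eq_toFinset_card']
      · intro t ht
        obtain ⟨u, hu, hd⟩ := hH s t ht
        exact ⟨u, by simpa using hu, hd⟩
    calc ({u : P | EG s u}.ncard : ℝ) ≤ ρ * (sInf {k : ℕ | ∃ U : Finset P, U.card = k ∧
            ∀ t : P, t ≠ s → ∃ u ∈ U, dist u t < dist s t / α} : ℕ) := hGapprox s
      _ ≤ ρ * {u : P | EH s u}.ncard :=
        mul_le_mul_of_nonneg_left (by exact_mod_cast h1) hρ0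
  refine ⟨hGcov, key, ?_, ?_⟩
  · rcases isEmpty_or_nonempty P with h | h
    · simp
    · obtain ⟨s0, -, hs0⟩ := Finset.exists_mem_eq_sup Finset.univ
        Finset.univ_nonempty (fun s : P => {u : P | EG s u}.ncard)
      rw [hs0]
      calc ({u : P | EG s0 u}.ncard : ℝ) ≤ ρ * {u : P | EH s0 u}.ncard := key s0
        _ ≤ ρ * (Finset.univ.sup (fun s : P => {u : P | EH s u}.ncard) : ℕ) := by
            apply mul_le_mul_of_nonneg_left _ hρ0
            exact_mod_cast Finset.le_sup (f := fun s : P => {u : P | EH s u}.ncard) (Finset.mem_univ s0)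
  · have hsum : ∀ E : P → P → Prop,
        {p : P × P | E p.1 p.2}.ncard = ∑ s : P, {u : P | E s u}.ncard := by
      intro E
      rw [Set.ncard_eq_toFinset_card']
      have : Set.toFinset {p : P × P | E p.1 p.2}
          = Finset.univ.filter (fun p : P × P => E p.1 p.2) := by
        ext p; simp
      rw [this, Finset.card_filter]
      rw [Fintype.sum_prod_type]
      congr 1
      ext s
      rw [Set.ncard_eq_toFinset_card']
      have : Set.toFinset {u : P | E s u} = Finset.univ.filter (fun u : P => E s u) := by
        ext u; simp
      rw [this, Finset.card_filter]
    rw [hsum EG, hsum EH]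
    push_cast
    rw [Finset.mul_sum]
    exact Finset.sum_le_sum fun s _ => key s
end

section
/- Let d be the perturbed path metric on [n]: d(i,j) = 1 + |i−j|/(n−1) for i ≠ j except d(i*,j*) = 1 for one fixed pair {i*,j*}. Then the graph consisting of the undirected path 1–2–⋯–n (both directions) together with the two directed edges (i*,j*) and (j*,i*) is 1-navigable with respect to d, and it has maximum out-degree at most 3. -/
/-- The perturbed path metric on `[n]`: `d(i,j) = 1 + |i-j|/(n-1)` for `i ≠ j`,
except the fixed pair `{iS, jS}` has distance `1`. -/
noncomputable def dpert (n : ℕ) (iS jS : Fin n) (i j : Fin n) : ℝ :=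
  if i = j then 0
  else if (i = iS ∧ j = jS) ∨ (i = jS ∧ j = iS) then 1
  else 1 + |(i : ℝ) - (j : ℝ)| / ((n : ℝ) - 1)

lemma dpert_le (n : ℕ) (hn : 2 ≤ n) (iS jS u t : Fin n) (h : u ≠ t) :
    dpert n iS jS u t ≤ 1 + |(u : ℝ) - (t : ℝ)| / ((n : ℝ) - 1) := by
  have hnpos : (0:ℝ) < (n:ℝ) - 1 := by
    have : (2:ℝ) ≤ (n:ℝ) := by exact_mod_cast hn
    linarith
  have hnn : 0 ≤ |(u : ℝ) - (t : ℝ)| / ((n : ℝ) - 1) :=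
    div_nonneg (abs_nonneg _) hnpos.le
  unfold dpert
  rw [if_neg h]
  split
  · linarith
  · exact le_rfl

lemma dpert_pos (n : ℕ) (hn : 2 ≤ n) (iS jS s t : Fin n) (h : s ≠ t) :
    0 < dpert n iS jS s t := by
  have hnpos : (0:ℝ) < (n:ℝ) - 1 := by
    have : (2:ℝ) ≤ (n:ℝ) := by exact_mod_cast hn
    linarith
  have hnn : 0 ≤ |(s : ℝ) - (t : ℝ)| / ((n : ℝ) - 1) :=
    div_nonneg (abs_nonneg _) hnpos.le
  unfold dpert
  rw [if_neg h]
  split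
  · norm_num
  · linarith

/-- the undirected path `1–2–⋯–n` together with the two directed
shortcut edges `(iS, jS)` and `(jS, iS)` is 1-navigable with respect to the
perturbed path metric, and has maximum out-degree at most 3. -/
theorem stmt13 (n : ℕ) (hn : 2 ≤ n) (iS jS : Fin n) (hij : iS ≠ jS)
    (E : Fin n → Fin n → Prop)
    (hE : ∀ s u : Fin n, E s u ↔
      ((u : ℕ) = (s : ℕ) + 1 ∨ (s : ℕ) = (u : ℕ) + 1 ∨
        (s = iS ∧ u = jS) ∨ (s = jS ∧ u = iS))) :
    (∀ s t : Fin n, s ≠ t →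
      ∃ u : Fin n, E s u ∧ dpert n iS jS u t < dpert n iS jS s t) ∧
    (∀ s : Fin n, {u : Fin n | E s u}.ncard ≤ 3) := by
  have hnpos : (0:ℝ) < (n:ℝ) - 1 := by
    have : (2:ℝ) ≤ (n:ℝ) := by exact_mod_cast hn
    linarith
  constructor
  · intro s t hst
    by_cases hA : s = iS ∧ t = jS
    · refine ⟨jS, ?_, ?_⟩
      · rw [hE]; right; right; left; exact ⟨hA.1, rfl⟩
      · have h1 : dpert n iS jS jS t = 0 := by simp [dpert, hA.2]
        rw [h1]; exact dpert_pos n hn iS jS s t hst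
    by_cases hB : s = jS ∧ t = iS
    · refine ⟨iS, ?_, ?_⟩
      · rw [hE]; right; right; right; exact ⟨hB.1, rfl⟩
      · have h1 : dpert n iS jS iS t = 0 := by simp [dpert, hB.2]
        rw [h1]; exact dpert_pos n hn iS jS s t hst
    have hd : dpert n iS jS s t = 1 + |(s:ℝ) - (t:ℝ)| / ((n:ℝ) - 1) := by
      unfold dpert
      rw [if_neg hst, if_neg]
      tauto
    have hvne : (s : ℕ) ≠ (t : ℕ) := fun h => hst (Fin.ext h)
    rcases lt_or_gt_of_ne hvne with hlt | hgt
    · -- s < t : go right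
      have hb : (s : ℕ) + 1 < n := lt_of_le_of_lt hlt t.isLt
      refine ⟨⟨(s : ℕ) + 1, hb⟩, ?_, ?_⟩
      · rw [hE]; left; rfl
      · set u : Fin n := ⟨(s : ℕ) + 1, hb⟩ with hu
        by_cases hut : u = t
        · rw [hut]
          have : dpert n iS jS t t = 0 := by simp [dpert]
          rw [this]
          exact dpert_pos n hn iS jS s t hst
        · have h1 := dpert_le n hn iS jS u t hut
          have hucast : (u : ℝ) = (s : ℝ) + 1 := by
            simp [hu]
          have hsr : (s : ℝ) + 1 ≤ (t : ℝ) := by exact_mod_cast hlt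
          have habs1 : |(u : ℝ) - (t : ℝ)| = (t:ℝ) - (s:ℝ) - 1 := by
            rw [hucast, abs_of_nonpos (by linarith)]; ring
          have habs2 : |(s : ℝ) - (t : ℝ)| = (t:ℝ) - (s:ℝ) := by
            rw [abs_of_nonpos (by linarith)]; ring
          rw [hd, habs2]
          rw [habs1] at h1
          have hdiv : ((t:ℝ) - (s:ℝ) - 1) / ((n:ℝ) - 1) < ((t:ℝ) - (s:ℝ)) / ((n:ℝ) - 1) := by
            exact (div_lt_div_iff_of_pos_right hnpos).mpr (by linarith)
          calc dpert n iS jS u t ≤ 1 + ((t:ℝ) - (s:ℝ) - 1) / ((n:ℝ) - 1) := h1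
            _ < 1 + ((t:ℝ) - (s:ℝ)) / ((n:ℝ) - 1) := by linarith
    · -- t < s : go left
      have hs1 : 1 ≤ (s : ℕ) := Nat.one_le_iff_ne_zero.mpr (by omega)
      have hb : (s : ℕ) - 1 < n := lt_of_le_of_lt (Nat.sub_le _ _) s.isLt
      refine ⟨⟨(s : ℕ) - 1, hb⟩, ?_, ?_⟩
      · rw [hE]; right; left; simp; omega
      · set u : Fin n := ⟨(s : ℕ) - 1, hb⟩ with hu
        by_cases hut : u = t
        · rw [hut]
          have : dpert n iS jS t t = 0 := by simp [dpert]
          rw [this]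
          exact dpert_pos n hn iS jS s t hst
        · have h1 := dpert_le n hn iS jS u t hut
          have hucast : (u : ℝ) = (s : ℝ) - 1 := by
            simp [hu]
            push_cast [Nat.cast_sub hs1]
            ring
          have htr : (t : ℝ) + 1 ≤ (s : ℝ) := by exact_mod_cast hgt
          have habs1 : |(u : ℝ) - (t : ℝ)| = (s:ℝ) - 1 - (t:ℝ) := by
            rw [hucast, abs_of_nonneg (by linarith)]
          have habs2 : |(s : ℝ) - (t : ℝ)| = (s:ℝ) - (t:ℝ) := by
            rw [abs_of_nonneg (by linarith)]
          rw [hd, habs2]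
          rw [habs1] at h1
          have hdiv : ((s:ℝ) - 1 - (t:ℝ)) / ((n:ℝ) - 1) < ((s:ℝ) - (t:ℝ)) / ((n:ℝ) - 1) :=
            (div_lt_div_iff_of_pos_right hnpos).mpr (by linarith)
          calc dpert n iS jS u t ≤ 1 + ((s:ℝ) - 1 - (t:ℝ)) / ((n:ℝ) - 1) := h1
            _ < 1 + ((s:ℝ) - (t:ℝ)) / ((n:ℝ) - 1) := by linarith
  · intro s
    set x : Fin n := if h : (s : ℕ) + 1 < n then ⟨(s:ℕ)+1, h⟩ else s with hx
    set y : Fin n := if h : 1 ≤ (s : ℕ) then ⟨(s:ℕ)-1, lt_of_le_of_lt (Nat.sub_le _ _) s.isLt⟩ else s with hy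
    set c : Fin n := if s = iS then jS else iS with hc
    have hsub : {u : Fin n | E s u} ⊆ {x, y, c} := by
      intro u hu
      rw [Set.mem_setOf_eq, hE] at hu
      rcases hu with h | h | ⟨h1, h2⟩ | ⟨h1, h2⟩
      · left
        have hb : (s : ℕ) + 1 < n := h ▸ u.isLt
        rw [hx, dif_pos hb]
        exact Fin.ext h
      · right; left
        have hb : 1 ≤ (s : ℕ) := by omega
        rw [hy, dif_pos hb]
        apply Fin.ext
        simp
        omega
      · right; right
        rw [hc, if_pos h1]
        exact h2
      · right; right
        rw [hc, if_neg (h1 ▸ hij.symm)]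
        exact h2
    calc {u : Fin n | E s u}.ncard ≤ ({x, y, c} : Set (Fin n)).ncard :=
          Set.ncard_le_ncard hsub (Set.toFinite _)
      _ ≤ 3 := by
          apply le_trans (Set.ncard_insert_le _ _)
          have := Set.ncard_insert_le y ({c} : Set (Fin n))
          simp [Set.ncard_singleton] at this ⊢
          omega
end
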